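/- Let k ≥ 1. If n = 2^{2k} - 1 - ∑_{r=0}^{k-2} ε_r·(3·2^{2r+1}) - β for some choice of ε_r ∈ {0,1} (for 0 ≤ r ≤ k-2) and β ∈ {0,2}, then i_n = +1. -/

import Mathlib

/-- `inv2 n` is the number of inversions in the binary representation of `n`,
i.e. the number of pairs of bit positions `a > b` such that bit `a` of `n` is `1`
and bit `b` of `n` is `0`. -/
def inv2 (n : ℕ) : ℕ :=
  ((Finset.range (n + 1) ×ˢ Finset.range (n + 1)).filter
    (fun p => p.2 < p.1 ∧ n.testBit p.1 = true ∧ n.testBit p.2 = false)).card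

/-- `iSeq n = (-1)^(inv2 n)`. -/
def iSeq (n : ℕ) : ℤ := (-1) ^ inv2 n


/-- An integer `n` is of the special form for `k ≥ 1` if
`n = 2^(2k) - 1 - ∑_{r=0}^{k-2} ε_r (3 ⬝ 2^(2r+1)) - β` for some choice of
`ε_r ∈ {0,1}` and `β ∈ {0,2}`. -/
def IsSpecialForm (k : ℕ) (n : ℤ) : Prop :=
  ∃ ε : ℕ → ℤ, (∀ r, ε r = 0 ∨ ε r = 1) ∧
    ∃ β : ℤ, (β = 0 ∨ β = 2) ∧
      n = 2 ^ (2 * k) - 1 - (∑ r ∈ Finset.range (k - 1), ε r * (3 * 2 ^ (2 * r + 1))) - β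

/-!
Appending a binary digit `1` to `n` does not change `inv₂ n`, while appending a `0` adds the
number of ones of `n`. The special numbers with `β = 0` arise from `3` by the steps
`m ↦ 4 m + 3` (append `11`) and `m ↦ 4 m - 3` (replace the final `1` by `001`), and along these
steps the number of ones of `(m - 1) / 2` stays odd, which keeps both `inv₂ m` and `inv₂ (m - 2)`
even.
-/

open Finset

namespace Nat

def inversions (n : ℕ) : Finset (ℕ × ℕ) :=
  (range (n + 1) ×ˢ range (n + 1)).filter
    (fun p => p.2 < p.1 ∧ n.testBit p.1 = true ∧ n.testBit p.2 = false)

theorem card_inversions (n : ℕ) : #n.inversions = inv2 n := rfl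

theorem mem_inversions {n : ℕ} {p : ℕ × ℕ} :
    p ∈ n.inversions ↔ p.2 < p.1 ∧ p.1 ∈ n.bitIndices ∧ p.2 ∉ n.bitIndices := by
  have hlt : ∀ {i}, n.testBit i → i < n + 1 := fun h =>
    (Nat.lt_two_pow_self.trans_le (Nat.ge_two_pow_of_testBit h)).trans (Nat.lt_succ_self n)
  simp only [inversions, mem_filter, mem_product, mem_range, mem_bitIndices, Bool.not_eq_true]
  constructor
  · exact fun h => h.2
  · rintro ⟨hba, ha, hb⟩
    exact ⟨⟨hlt ha, hba.trans (hlt ha)⟩, hba, ha, hb⟩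

def shiftPair : ℕ × ℕ ↪ ℕ × ℕ := (addRightEmbedding 1).prodMap (addRightEmbedding 1)

theorem inversions_two_mul_add_one (n : ℕ) :
    (2 * n + 1).inversions = n.inversions.map shiftPair := by
  ext ⟨a, b⟩
  cases a <;> cases b <;> simp [mem_inversions, shiftPair]

theorem inversions_two_mul (n : ℕ) :
    (2 * n).inversions = n.inversions.map shiftPair ∪
      n.bitIndices.toFinset.map (addRightEmbedding 1) ×ˢ {0} := by
  ext ⟨a, b⟩
  cases a <;> cases b <;> simp [mem_inversions, shiftPair]

theorem inv2_two_mul_add_one (n : ℕ) : inv2 (2 * n + 1) = inv2 n := by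
  rw [← card_inversions, inversions_two_mul_add_one, card_map, card_inversions]

theorem inv2_two_mul (n : ℕ) : inv2 (2 * n) = inv2 n + n.bitIndices.length := by
  rw [← card_inversions, inversions_two_mul, card_union_of_disjoint, card_map, card_product,
    card_map, List.toFinset_card_of_nodup bitIndices_nodup, card_singleton, mul_one, card_inversions]
  rw [disjoint_left]
  rintro ⟨a, b⟩
  cases b <;> simp [mem_inversions, shiftPair]

end Nat

open Nat

/-- `2 * q + 1` runs through the special-form numbers with `β = 0`: the coefficient `ε_r = 0`
resp. `ε_r = 1` turns `m` into `4 * m + 3` resp. `4 * m - 3`. -/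
inductive IsSpecialHalf : ℕ → Prop
  | one : IsSpecialHalf 1
  | four_mul_add_three {q : ℕ} : IsSpecialHalf q → IsSpecialHalf (4 * q + 3)
  | four_mul {q : ℕ} : IsSpecialHalf q → IsSpecialHalf (4 * q)

theorem IsSpecialHalf.even_inv2 {q : ℕ} (hq : IsSpecialHalf q) :
    Even (inv2 q) ∧ Even (inv2 (q - 1)) ∧ Odd q.bitIndices.length := by
  induction hq with
  | one => exact ⟨by decide, by decide, by simp⟩
  | @four_mul_add_three q _ ih =>
    obtain ⟨hq, -, hlen⟩ := ih
    rw [show 4 * q + 3 = 2 * (2 * q + 1) + 1 by ring, Nat.add_sub_cancel]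
    simp only [inv2_two_mul_add_one, inv2_two_mul, bitIndices_two_mul_add_one, List.length_cons,
      List.length_map]
    exact ⟨hq, hq.add hlen.add_one, hlen.add_one.add_one⟩
  | @four_mul q _ ih =>
    obtain ⟨hq, hpred, hlen⟩ := ih
    refine ⟨?_, ?_, ?_⟩
    · rw [show 4 * q = 2 * (2 * q) by ring, inv2_two_mul, inv2_two_mul, bitIndices_two_mul,
        List.length_map, add_assoc]
      exact hq.add (Even.add_self _)
    · rcases q with _ | p
      · exact hpred
      · rwa [show 4 * (p + 1) - 1 = 2 * (2 * p + 1) + 1 by omega, inv2_two_mul_add_one,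
          inv2_two_mul_add_one]
    · simpa [show 4 * q = 2 * (2 * q) by ring] using hlen

theorem exists_isSpecialHalf (k : ℕ) (ε : ℕ → ℤ) (hε : ∀ r, ε r = 0 ∨ ε r = 1) :
    ∃ q, IsSpecialHalf q ∧
      (2 * q + 1 : ℤ) = 2 ^ (2 * (k + 1)) - 1 - ∑ r ∈ range k, ε r * (3 * 2 ^ (2 * r + 1)) := by
  induction k generalizing ε with
  | zero => exact ⟨1, .one, by norm_num⟩
  | succ k ih =>
    obtain ⟨q, hq, hval⟩ := ih (fun r => ε (r + 1)) (fun r => hε (r + 1))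
    have hsum : ∑ r ∈ range (k + 1), ε r * (3 * 2 ^ (2 * r + 1)) =
        4 * ∑ r ∈ range k, ε (r + 1) * (3 * 2 ^ (2 * r + 1)) + 6 * ε 0 := by
      rw [sum_range_succ', mul_sum]
      congr 1
      · refine sum_congr rfl fun r _ => ?_
        ring
      · ring
    have hpow : (2 : ℤ) ^ (2 * (k + 1 + 1)) = 4 * 2 ^ (2 * (k + 1)) := by ring
    rw [hsum, hpow]
    rcases hε 0 with h0 | h1
    · exact ⟨4 * q + 3, hq.four_mul_add_three, by push_cast; linear_combination 4 * hval + 6 * h0⟩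
    · exact ⟨4 * q, hq.four_mul, by push_cast; linear_combination 4 * hval + 6 * h1⟩

theorem iSeq_eq_one_of_specialForm (k : ℕ) (hk : 1 ≤ k) (n : ℕ)
    (h : IsSpecialForm k (n : ℤ)) : iSeq n = 1 := by
  obtain ⟨ε, hε, β, hβ, hn⟩ := h
  obtain ⟨j, rfl⟩ : ∃ j, k = j + 1 := ⟨k - 1, by omega⟩
  obtain ⟨q, hq, hval⟩ := exists_isSpecialHalf j ε hε
  obtain ⟨hq_even, hpred_even, -⟩ := hq.even_inv2
  rw [Nat.add_sub_cancel, ← hval] at hn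
  suffices Even (inv2 n) from this.neg_one_pow
  rcases hβ with rfl | rfl
  · rwa [show n = 2 * q + 1 by omega, inv2_two_mul_add_one]
  · rwa [show n = 2 * (q - 1) + 1 by omega, inv2_two_mul_add_one]
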